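/- arXiv:2206.07128 — 4 statements merged into one kernel-verified Lean document; each statement's English description precedes it below -/
import Mathlib

section
/- For p ≥ 2 and all real x, y, we have (sign(x)|x|^{p-1} - sign(y)|y|^{p-1})·(x - y) ≥ 2^{2-p}·|x - y|^p. -/
open Real

/-- Superadditivity of rpow on ℝ. -/
lemma real_add_rpow_le {q : ℝ} (hq : 1 ≤ q) {a b : ℝ} (ha : 0 ≤ a) (hb : 0 ≤ b) :
    a ^ q + b ^ q ≤ (a + b) ^ q := by
  have h := NNReal.add_rpow_le_rpow_add a.toNNReal b.toNNReal hq
  have := (NNReal.coe_le_coe).2 h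
  push_cast at this
  rwa [Real.coe_toNNReal a ha, Real.coe_toNNReal b hb] at this

/-- Convexity-type bound. -/
lemma real_rpow_add_le {q : ℝ} (hq : 1 ≤ q) {a b : ℝ} (ha : 0 ≤ a) (hb : 0 ≤ b) :
    (a + b) ^ q ≤ 2 ^ (q - 1) * (a ^ q + b ^ q) := by
  have h := NNReal.rpow_add_le_mul_rpow_add_rpow a.toNNReal b.toNNReal hq
  have := (NNReal.coe_le_coe).2 h
  push_cast at this
  rwa [Real.coe_toNNReal a ha, Real.coe_toNNReal b hb] at this

lemma sign_abs_rpow (p : ℝ) (hp : 2 ≤ p) {x : ℝ} (hx : 0 ≤ x) :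
    Real.sign x * |x| ^ (p - 1) = x ^ (p - 1) := by
  rcases eq_or_lt_of_le hx with h | h
  · rw [← h, Real.sign_zero, zero_mul, Real.zero_rpow (by linarith)]
  · rw [Real.sign_of_pos h, abs_of_pos h, one_mul]

lemma rpow_split (p : ℝ) (hp : 2 ≤ p) {t : ℝ} (ht : 0 ≤ t) :
    t ^ p = t ^ (p - 1) * t := by
  conv_lhs => rw [show p = (p - 1) + 1 by ring]
  rw [Real.rpow_add' ht (by linarith), Real.rpow_one]

lemma gp_aux_same (p : ℝ) (hp : 2 ≤ p) {x y : ℝ} (hy : 0 ≤ y) (hxy : y ≤ x) :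
    (x ^ (p - 1) - y ^ (p - 1)) * (x - y) ≥ (2 : ℝ) ^ (2 - p) * (x - y) ^ p := by
  have hq : (1 : ℝ) ≤ p - 1 := by linarith
  have hd : (0:ℝ) ≤ x - y := by linarith
  have h1 : (x - y) ^ (p - 1) + y ^ (p - 1) ≤ x ^ (p - 1) := by
    have := real_add_rpow_le hq hd hy
    rwa [sub_add_cancel] at this
  have h2 : (2 : ℝ) ^ (2 - p) ≤ 1 :=
    Real.rpow_le_one_of_one_le_of_nonpos one_le_two (by linarith)
  have h3 := rpow_split p hp hd
  have h4 : (0:ℝ) ≤ (x - y) ^ (p - 1) := Real.rpow_nonneg hd _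
  have h5 : (0:ℝ) ≤ (2:ℝ) ^ (2 - p) := Real.rpow_nonneg (by norm_num) _
  rw [ge_iff_le, h3]
  have : (2 : ℝ) ^ (2 - p) * (x - y) ^ (p - 1) ≤ x ^ (p - 1) - y ^ (p - 1) := by
    nlinarith
  nlinarith

lemma gp_aux_mixed (p : ℝ) (hp : 2 ≤ p) {x z : ℝ} (hx : 0 ≤ x) (hz : 0 ≤ z) :
    (x ^ (p - 1) + z ^ (p - 1)) * (x + z) ≥ (2 : ℝ) ^ (2 - p) * (x + z) ^ p := by
  have hq : (1 : ℝ) ≤ p - 1 := by linarith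
  have hs : (0:ℝ) ≤ x + z := by linarith
  have h1 : (x + z) ^ (p - 1) ≤ 2 ^ (p - 1 - 1) * (x ^ (p - 1) + z ^ (p - 1)) :=
    real_rpow_add_le hq hx hz
  have h3 := rpow_split p hp hs
  have h5 : (0:ℝ) ≤ (2:ℝ) ^ (2 - p) := Real.rpow_nonneg (by norm_num) _
  have hpow : (2 : ℝ) ^ (2 - p) * 2 ^ (p - 1 - 1) = 1 := by
    rw [← Real.rpow_add (by norm_num : (0:ℝ) < 2), show 2 - p + (p - 1 - 1) = 0 by ring,
      Real.rpow_zero]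
  rw [ge_iff_le, h3]
  have key : (2 : ℝ) ^ (2 - p) * (x + z) ^ (p - 1) ≤ x ^ (p - 1) + z ^ (p - 1) := by
    calc (2 : ℝ) ^ (2 - p) * (x + z) ^ (p - 1)
        ≤ (2 : ℝ) ^ (2 - p) * (2 ^ (p - 1 - 1) * (x ^ (p - 1) + z ^ (p - 1))) :=
          mul_le_mul_of_nonneg_left h1 h5
      _ = x ^ (p - 1) + z ^ (p - 1) := by rw [← mul_assoc, hpow, one_mul]
  nlinarith

/-- Growth of `g_p(x) = sign(x)|x|^{p-1}` for `p ∈ [2, ∞)`: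
`(g_p(x) - g_p(y))(x - y) ≥ 2^{2-p} |x - y|^p`. -/
theorem gp_growth_ge_two (p : ℝ) (hp : 2 ≤ p) (x y : ℝ) :
    (Real.sign x * |x| ^ (p - 1) - Real.sign y * |y| ^ (p - 1)) * (x - y) ≥
      (2 : ℝ) ^ (2 - p) * |x - y| ^ p := by
  -- reduce to y ≤ x by symmetry
  have key : ∀ a b : ℝ, b ≤ a →
      (Real.sign a * |a| ^ (p - 1) - Real.sign b * |b| ^ (p - 1)) * (a - b) ≥
        (2 : ℝ) ^ (2 - p) * |a - b| ^ p := by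
    intro a b hba
    have hd : (0:ℝ) ≤ a - b := by linarith
    rw [abs_of_nonneg hd]
    rcases le_or_gt 0 b with hb | hb
    · rw [sign_abs_rpow p hp (hb.trans hba), sign_abs_rpow p hp hb]
      exact gp_aux_same p hp hb hba
    · rcases le_or_gt 0 a with ha | ha
      · -- a ≥ 0 > b
        rw [sign_abs_rpow p hp ha, Real.sign_of_neg hb, abs_of_neg hb]
        have := gp_aux_mixed p hp ha (le_of_lt (neg_pos.2 hb))
        have e1 : a + -b = a - b := by ring
        rw [e1] at this
        calc (a ^ (p - 1) - -1 * (-b) ^ (p - 1)) * (a - b)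
            = (a ^ (p - 1) + (-b) ^ (p - 1)) * (a - b) := by ring
          _ ≥ (2 : ℝ) ^ (2 - p) * (a - b) ^ p := this
      · -- b ≤ a < 0
        have h1 : (0:ℝ) ≤ -a := by linarith
        have h2 : -a ≤ -b := by linarith
        have := gp_aux_same p hp h1 h2
        have e1 : -b - -a = a - b := by ring
        rw [e1] at this
        rw [Real.sign_of_neg hb, Real.sign_of_neg ha, abs_of_neg hb, abs_of_neg ha]
        calc (-1 * (-a) ^ (p - 1) - -1 * (-b) ^ (p - 1)) * (a - b)
            = ((-b) ^ (p - 1) - (-a) ^ (p - 1)) * (a - b) := by ring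
          _ ≥ (2 : ℝ) ^ (2 - p) * (a - b) ^ p := this
  rcases le_or_gt y x with h | h
  · exact key x y h
  · have := key y x h.le
    have e1 : (Real.sign y * |y| ^ (p - 1) - Real.sign x * |x| ^ (p - 1)) * (y - x) =
        (Real.sign x * |x| ^ (p - 1) - Real.sign y * |y| ^ (p - 1)) * (x - y) := by ring
    rw [e1, abs_sub_comm] at this
    exact this
end

section
/- Let X be a real normed space and X' its continuous dual. Suppose Y ⊆ ℝ^M, S : ℝ^M → X' maps y ↦ f_y, and e_{i,j} ∈ X'' are elements satisfying: (i) e_{1,1} = e_{2,2} = 0; (ii) ‖e_{2,1} - e_{1,1}‖ ≤ K‖y₁ - y₂‖₂; (iii) ⟨e_{2,1} - e_{2,2}, f_{y₁} - f_{y₂}⟩ ≥ C‖f_{y₁} - f_{y₂}‖^α with α ≥ 2, C > 0, K ≥ 0. Then ‖f_{y₁} - f_{y₂}‖ ≤ (K/C)^{1/(α-1)} · ‖y₁ - y₂‖₂^{1/(α-1)}. -/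
/-! Testing the `α`-convexity inequality against `f_{y₁} - f_{y₂}` and bounding the pairing by
duality gives `C ‖f_{y₁} - f_{y₂}‖ ^ α ≤ K ‖y₁ - y₂‖ ‖f_{y₁} - f_{y₂}‖`; dividing by
`‖f_{y₁} - f_{y₂}‖` and taking the `1 / (α - 1)`-th power yields the Hölder bound. -/

lemma Real.le_rpow_of_mul_rpow_le_mul {t B C α : ℝ} (ht : 0 ≤ t) (hB : 0 ≤ B) (hC : 0 < C)
    (hα : 1 < α) (h : C * t ^ α ≤ B * t) : t ≤ (B / C) ^ (1 / (α - 1)) := by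
  rcases ht.eq_or_lt with rfl | ht
  · positivity
  have hα' : 0 < α - 1 := sub_pos.mpr hα
  rw [one_div, Real.le_rpow_inv_iff_of_pos ht.le (by positivity) hα', le_div_iff₀ hC]
  have : C * t ^ (α - 1) * t ≤ B * t := by
    rwa [mul_assoc, ← Real.rpow_add_one ht.ne', sub_add_cancel]
  nlinarith [le_of_mul_le_mul_right this ht]

theorem abstract_holder_stability_general {E : Type*} [NormedAddCommGroup E] [NormedSpace ℝ E]
    {M : ℕ} (y₁ y₂ : EuclideanSpace ℝ (Fin M))
    (f₁ f₂ : StrongDual ℝ E)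
    (e11 e21 e22 : StrongDual ℝ (StrongDual ℝ E))
    (K C α : ℝ) (hK : 0 ≤ K) (hC : 0 < C) (hα : 2 ≤ α)
    (h11 : e11 = 0) (h22 : e22 = 0)
    (hLip : ‖e21 - e11‖ ≤ K * ‖y₁ - y₂‖)
    (hconv : C * ‖f₁ - f₂‖ ^ α ≤ (e21 - e22) (f₁ - f₂)) :
    ‖f₁ - f₂‖ ≤ (K / C) ^ (1 / (α - 1)) * ‖y₁ - y₂‖ ^ (1 / (α - 1)) := by
  subst h11 h22
  have key : C * ‖f₁ - f₂‖ ^ α ≤ K * ‖y₁ - y₂‖ * ‖f₁ - f₂‖ :=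
    calc C * ‖f₁ - f₂‖ ^ α ≤ (e21 - 0) (f₁ - f₂) := hconv
      _ ≤ ‖e21 - 0‖ * ‖f₁ - f₂‖ := (le_abs_self _).trans ((e21 - 0).le_opNorm _)
      _ ≤ K * ‖y₁ - y₂‖ * ‖f₁ - f₂‖ := by gcongr
  calc ‖f₁ - f₂‖ ≤ (K * ‖y₁ - y₂‖ / C) ^ (1 / (α - 1)) :=
        Real.le_rpow_of_mul_rpow_le_mul (norm_nonneg _) (by positivity) hC (by linarith) key
    _ = (K / C) ^ (1 / (α - 1)) * ‖y₁ - y₂‖ ^ (1 / (α - 1)) := by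
        rw [mul_div_right_comm, Real.mul_rpow (by positivity) (norm_nonneg _)]

/-- Abstract local Hölder stability: if the gradients `e_{i,j} ∈ X''` of the objective
satisfy optimality (`e_{1,1} = e_{2,2} = 0`), Lipschitz dependence on the measurements,
and an `α`-uniform convexity-type lower bound, then the solutions satisfy a Hölder bound. -/
theorem abstract_holder_stability {E : Type*} [NormedAddCommGroup E] [NormedSpace ℝ E]
    {M : ℕ} (Y : Set (EuclideanSpace ℝ (Fin M))) (y₁ y₂ : EuclideanSpace ℝ (Fin M))
    (hy₁ : y₁ ∈ Y) (hy₂ : y₂ ∈ Y)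
    (f₁ f₂ : StrongDual ℝ E)
    (e11 e21 e22 : StrongDual ℝ (StrongDual ℝ E))
    (K C α : ℝ) (hK : 0 ≤ K) (hC : 0 < C) (hα : 2 ≤ α)
    (h11 : e11 = 0) (h22 : e22 = 0)
    (hLip : ‖e21 - e11‖ ≤ K * ‖y₁ - y₂‖)
    (hconv : C * ‖f₁ - f₂‖ ^ α ≤ (e21 - e22) (f₁ - f₂)) :
    ‖f₁ - f₂‖ ≤ (K / C) ^ (1 / (α - 1)) * ‖y₁ - y₂‖ ^ (1 / (α - 1)) :=
  abstract_holder_stability_general y₁ y₂ f₁ f₂ e11 e21 e22 K C α hK hC hα h11 h22 hLip hconv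
end

section
/- Let p ∈ (1, 2) and let f₁, f₂ ∈ L_p(μ) with ‖f₁‖_{L_p}, ‖f₂‖_{L_p} ≤ r. Then ‖f₁ - f₂‖_{L_p}² ≤ ((2r)^{2-p}/(p-1)) · ∫ (g_p∘f₁ - g_p∘f₂)·(f₁ - f₂) dμ, where g_p(x) = sign(x)|x|^{p-1}. -/
open MeasureTheory

/-!
Write `g = g_p` and `s = |f₁| + |f₂|`. On each segment `[b, a]` the derivative of `g` is
`(p - 1)|t|^{p-2} ≥ (p - 1)(|a| + |b|)^{p-2}` because `p - 2 < 0`, so pointwise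
`(p - 1) s^{p-2} (f₁ - f₂)² ≤ (g ∘ f₁ - g ∘ f₂)(f₁ - f₂)`. Hölder with exponents `2/p` and
`2/(2-p)`, applied to `|f₁ - f₂|^p = (s^{p-2} (f₁ - f₂)²)^{p/2} (s^p)^{(2-p)/2}`, gives
`‖f₁ - f₂‖_p² ≤ ∫ s^{p-2} (f₁ - f₂)² · ‖s‖_p^{2-p}`, and `‖s‖_p ≤ 2r`.
-/

/-- `g_p = signPow (p - 1)`. -/
noncomputable def signPow (q t : ℝ) : ℝ := Real.sign t * |t| ^ q

lemma signPow_neg (q t : ℝ) : signPow q (-t) = -signPow q t := by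
  simp only [signPow, Real.sign_neg, abs_neg, neg_mul]

lemma signPow_of_nonneg {q t : ℝ} (hq : q ≠ 0) (ht : 0 ≤ t) : signPow q t = t ^ q := by
  rcases ht.eq_or_lt with rfl | ht
  · simp [signPow, Real.zero_rpow hq]
  · rw [signPow, Real.sign_of_pos ht, abs_of_pos ht, one_mul]

/-- Concavity of `t ↦ t ^ q`, via weighted AM-GM. -/
lemma Real.rpow_le_rpow_add_mul_sub {q x y : ℝ} (hq0 : 0 ≤ q) (hq1 : q ≤ 1) (hx : 0 < x)
    (hy : 0 ≤ y) : y ^ q ≤ x ^ q + q * x ^ (q - 1) * (y - x) := by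
  have amgm := Real.geom_mean_le_arith_mean2_weighted hq0 (by linarith) hy hx.le
    (add_sub_cancel q 1)
  have hx' : 0 < x ^ (q - 1) := Real.rpow_pos_of_pos hx _
  have e1 : x ^ (1 - q) * x ^ (q - 1) = 1 := by
    rw [← Real.rpow_add hx]; simp
  have e2 : x * x ^ (q - 1) = x ^ q := by
    rw [mul_comm, Real.rpow_sub_one hx.ne', div_mul_cancel₀ _ hx.ne']
  calc y ^ q = y ^ q * x ^ (1 - q) * x ^ (q - 1) := by rw [mul_assoc, e1, mul_one]
    _ ≤ (q * y + (1 - q) * x) * x ^ (q - 1) := mul_le_mul_of_nonneg_right amgm hx'.le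
    _ = x ^ q + q * x ^ (q - 1) * (y - x) := by rw [← e2]; ring

lemma signPow_gap_of_nonneg {p a b : ℝ} (hp1 : 1 < p) (hp2 : p ≤ 2) (hb : 0 ≤ b) (hba : b ≤ a) :
    (p - 1) * ((|a| + |b|) ^ (p - 2) * (a - b) ^ 2) ≤
      (signPow (p - 1) a - signPow (p - 1) b) * (a - b) := by
  rcases hba.eq_or_lt with rfl | hba
  · simp
  have ha : 0 < a := hb.trans_lt hba
  rw [signPow_of_nonneg (by linarith) ha.le, signPow_of_nonneg (by linarith) hb,
    abs_of_pos ha, abs_of_nonneg hb]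
  have tangent := Real.rpow_le_rpow_add_mul_sub (by linarith) (by linarith) ha hb (q := p - 1)
  have hweight : (a + b) ^ (p - 2) ≤ a ^ (p - 1 - 1) :=
    Real.rpow_le_rpow_of_nonpos ha (by linarith) (by linarith) |>.trans_eq (by ring_nf)
  have hab : 0 ≤ a - b := by linarith
  calc (p - 1) * ((a + b) ^ (p - 2) * (a - b) ^ 2)
      ≤ (p - 1) * (a ^ (p - 1 - 1) * (a - b) ^ 2) := by gcongr
    _ = ((p - 1) * a ^ (p - 1 - 1) * (a - b)) * (a - b) := by ring
    _ ≤ (a ^ (p - 1) - b ^ (p - 1)) * (a - b) := by gcongr; linarith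

lemma signPow_gap_of_nonpos_of_nonneg {p a b : ℝ} (hp1 : 1 < p) (hp2 : p ≤ 2) (hb : b ≤ 0)
    (ha : 0 ≤ a) :
    (p - 1) * ((|a| + |b|) ^ (p - 2) * (a - b) ^ 2) ≤
      (signPow (p - 1) a - signPow (p - 1) b) * (a - b) := by
  rcases (sub_nonneg.2 (hb.trans ha)).eq_or_lt with hab | hab
  · rw [← hab]; simp
  rw [← neg_neg b, signPow_neg, signPow_of_nonneg (by linarith) ha,
    signPow_of_nonneg (by linarith) (neg_nonneg.2 hb), abs_of_nonneg ha, abs_neg,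
    abs_of_nonneg (neg_nonneg.2 hb), sub_neg_eq_add, sub_neg_eq_add]
  have hsum : 0 < a + -b := by linarith
  have subadd : (a + -b) ^ (p - 1) ≤ a ^ (p - 1) + (-b) ^ (p - 1) :=
    Real.rpow_add_le_add_rpow ha (neg_nonneg.2 hb) (by linarith) (by linarith)
  have hpow : (a + -b) ^ (p - 2) * (a + -b) ^ 2 = (a + -b) ^ (p - 1) * (a + -b) := by
    rw [sq, ← mul_assoc, ← Real.rpow_add_one hsum.ne']; ring_nf
  calc (p - 1) * ((a + -b) ^ (p - 2) * (a + -b) ^ 2)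
      = (p - 1) * (a + -b) ^ (p - 1) * (a + -b) := by rw [hpow, mul_assoc]
    _ ≤ 1 * (a + -b) ^ (p - 1) * (a + -b) := by gcongr; linarith
    _ ≤ (a ^ (p - 1) + (-b) ^ (p - 1)) * (a + -b) := by rw [one_mul]; gcongr

lemma signPow_gap_of_le {p a b : ℝ} (hp1 : 1 < p) (hp2 : p ≤ 2) (hba : b ≤ a) :
    (p - 1) * ((|a| + |b|) ^ (p - 2) * (a - b) ^ 2) ≤
      (signPow (p - 1) a - signPow (p - 1) b) * (a - b) := by
  by_cases hb : 0 ≤ b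
  · exact signPow_gap_of_nonneg hp1 hp2 hb hba
  by_cases ha : 0 ≤ a
  · exact signPow_gap_of_nonpos_of_nonneg hp1 hp2 (le_of_not_ge hb) ha
  have h := signPow_gap_of_nonneg hp1 hp2 (neg_nonneg.2 (le_of_not_ge ha)) (neg_le_neg hba)
  rw [signPow_neg, signPow_neg, abs_neg, abs_neg, add_comm |b|] at h
  convert h using 1 <;> ring

lemma signPow_gap {p : ℝ} (hp1 : 1 < p) (hp2 : p ≤ 2) (a b : ℝ) :
    (p - 1) * ((|a| + |b|) ^ (p - 2) * (a - b) ^ 2) ≤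
      (signPow (p - 1) a - signPow (p - 1) b) * (a - b) := by
  rcases le_total b a with hba | hab
  · exact signPow_gap_of_le hp1 hp2 hba
  · rw [add_comm |a|]
    convert signPow_gap_of_le hp1 hp2 hab using 1 <;> ring

lemma Real.add_rpow_le_two_rpow_mul_add_rpow {p a b : ℝ} (ha : 0 ≤ a) (hb : 0 ≤ b) (hp : 1 ≤ p) :
    (a + b) ^ p ≤ 2 ^ (p - 1) * (a ^ p + b ^ p) := by
  lift a to NNReal using ha
  lift b to NNReal using hb
  exact_mod_cast NNReal.rpow_add_le_mul_rpow_add_rpow a b hp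

section
variable {X : Type*} [MeasurableSpace X] {μ : Measure X}

lemma memLp_rpow_inv_of_integrable {a : ℝ} (ha : 0 < a) {F : X → ℝ} (hF0 : ∀ x, 0 ≤ F x)
    (hF : Integrable F μ) : MemLp (fun x => F x ^ a⁻¹) (ENNReal.ofReal a) μ := by
  have hm : AEStronglyMeasurable (fun x => F x ^ a⁻¹) μ :=
    (hF.aestronglyMeasurable.aemeasurable.pow_const a⁻¹).aestronglyMeasurable
  refine (integrable_norm_rpow_iff hm (by simpa using ha) ENNReal.ofReal_ne_top).1 ?_
  refine hF.congr (Filter.Eventually.of_forall fun x => ?_)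
  dsimp only
  rw [ENNReal.toReal_ofReal ha.le, Real.norm_of_nonneg (Real.rpow_nonneg (hF0 x) _),
    Real.rpow_inv_rpow (hF0 x) ha.ne']

lemma integral_rpow_inv_mul_rpow_inv_le {a b : ℝ} (hab : a.HolderConjugate b) {F G : X → ℝ}
    (hF0 : ∀ x, 0 ≤ F x) (hG0 : ∀ x, 0 ≤ G x) (hF : Integrable F μ) (hG : Integrable G μ) :
    ∫ x, F x ^ a⁻¹ * G x ^ b⁻¹ ∂μ ≤ (∫ x, F x ∂μ) ^ a⁻¹ * (∫ x, G x ∂μ) ^ b⁻¹ := by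
  have h := integral_mul_le_Lp_mul_Lq_of_nonneg hab
    (Filter.Eventually.of_forall fun x => Real.rpow_nonneg (hF0 x) a⁻¹)
    (Filter.Eventually.of_forall fun x => Real.rpow_nonneg (hG0 x) b⁻¹)
    (memLp_rpow_inv_of_integrable hab.pos hF0 hF)
    (memLp_rpow_inv_of_integrable hab.symm.pos hG0 hG)
  simpa only [Real.rpow_inv_rpow (hF0 _) hab.ne_zero, Real.rpow_inv_rpow (hG0 _) hab.symm.ne_zero,
    one_div] using h

lemma rpow_mul_sq_rpow_mul_rpow_rpow_eq_abs_rpow {p s u : ℝ} (hp : 0 < p) (hus : |u| ≤ s) :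
    (s ^ (p - 2) * u ^ 2) ^ (p / 2) * (s ^ p) ^ ((2 - p) / 2) = |u| ^ p := by
  rcases (abs_nonneg u).trans hus |>.eq_or_lt with rfl | hs
  · obtain rfl : u = 0 := abs_nonpos_iff.1 hus
    simp [Real.zero_rpow hp.ne', Real.zero_rpow (half_pos hp).ne']
  rw [Real.mul_rpow (Real.rpow_nonneg hs.le _) (sq_nonneg u), ← sq_abs,
    ← Real.rpow_natCast, ← Real.rpow_mul hs.le, ← Real.rpow_mul (abs_nonneg u),
    ← Real.rpow_mul hs.le, mul_right_comm, ← Real.rpow_add hs,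
    show (p - 2) * (p / 2) + p * ((2 - p) / 2) = 0 by ring, Real.rpow_zero, one_mul]
  congr 1
  push_cast
  ring

lemma sq_integral_rpow_abs_rpow_le {p : ℝ} (hp0 : 0 < p) (hp2 : p < 2) {s u : X → ℝ}
    (hus : ∀ x, |u x| ≤ s x) (hw : Integrable (fun x => s x ^ (p - 2) * u x ^ 2) μ)
    (hs : Integrable (fun x => s x ^ p) μ) :
    ((∫ x, |u x| ^ p ∂μ) ^ (1 / p)) ^ 2 ≤
      (∫ x, s x ^ (p - 2) * u x ^ 2 ∂μ) * ((∫ x, s x ^ p ∂μ) ^ (1 / p)) ^ (2 - p) := by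
  have hs0 : ∀ x, 0 ≤ s x := fun x => (abs_nonneg _).trans (hus x)
  have hw0 : ∀ x, 0 ≤ s x ^ (p - 2) * u x ^ 2 := fun x =>
    mul_nonneg (Real.rpow_nonneg (hs0 x) _) (sq_nonneg _)
  have hconj : (2 / p).HolderConjugate (2 / (2 - p)) := by
    rw [Real.holderConjugate_iff]
    refine ⟨(one_lt_div hp0).2 hp2, ?_⟩
    rw [inv_div, inv_div]
    ring
  have holder := integral_rpow_inv_mul_rpow_inv_le hconj hw0
    (fun x => Real.rpow_nonneg (hs0 x) p) hw hs
  simp only [inv_div, rpow_mul_sq_rpow_mul_rpow_rpow_eq_abs_rpow hp0 (hus _)] at holder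
  have hu0 : 0 ≤ ∫ x, |u x| ^ p ∂μ := integral_nonneg fun x => Real.rpow_nonneg (abs_nonneg _) _
  have hW0 : 0 ≤ ∫ x, s x ^ (p - 2) * u x ^ 2 ∂μ := integral_nonneg hw0
  have hS0 : 0 ≤ ∫ x, s x ^ p ∂μ := integral_nonneg fun x => Real.rpow_nonneg (hs0 x) _
  calc ((∫ x, |u x| ^ p ∂μ) ^ (1 / p)) ^ 2 = (∫ x, |u x| ^ p ∂μ) ^ (2 / p) := by
        rw [← Real.rpow_mul_natCast hu0]; ring_nf
    _ ≤ ((∫ x, s x ^ (p - 2) * u x ^ 2 ∂μ) ^ (p / 2) *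
          (∫ x, s x ^ p ∂μ) ^ ((2 - p) / 2)) ^ (2 / p) := by gcongr
    _ = (∫ x, s x ^ (p - 2) * u x ^ 2 ∂μ) * ((∫ x, s x ^ p ∂μ) ^ (1 / p)) ^ (2 - p) := by
        rw [Real.mul_rpow (by positivity) (by positivity), ← Real.rpow_mul hW0,
          ← Real.rpow_mul hS0, ← Real.rpow_mul hS0, div_mul_div_cancel₀' hp0.ne',
          div_self two_ne_zero, Real.rpow_one]
        congr 2
        field_simp

lemma integrable_add_abs_rpow {p : ℝ} (hp : 1 ≤ p) {f g : X → ℝ}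
    (hf : AEStronglyMeasurable f μ) (hg : AEStronglyMeasurable g μ)
    (hfi : Integrable (fun x => |f x| ^ p) μ) (hgi : Integrable (fun x => |g x| ^ p) μ) :
    Integrable (fun x => (|f x| + |g x|) ^ p) μ := by
  refine ((hfi.add hgi).const_mul (2 ^ (p - 1))).mono'
    ((hf.norm.add hg.norm).aemeasurable.pow_const p).aestronglyMeasurable
    (Filter.Eventually.of_forall fun x => ?_)
  rw [Real.norm_of_nonneg (by positivity)]
  exact Real.add_rpow_le_two_rpow_mul_add_rpow (abs_nonneg _) (abs_nonneg _) hp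

lemma integral_rpow_abs_le_of_rpow_inv_le {p r : ℝ} (hp : 0 < p) {f : X → ℝ}
    (hfr : (∫ x, |f x| ^ p ∂μ) ^ (1 / p) ≤ r) : ∫ x, |f x| ^ p ∂μ ≤ r ^ p := by
  have h0 : 0 ≤ ∫ x, |f x| ^ p ∂μ := integral_nonneg fun x => Real.rpow_nonneg (abs_nonneg _) _
  rw [one_div] at hfr
  exact (Real.rpow_inv_le_iff_of_pos h0 ((Real.rpow_nonneg h0 _).trans hfr) hp).1 hfr

lemma rpow_integral_add_abs_rpow_le {p r : ℝ} (hp : 1 ≤ p) {f g : X → ℝ}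
    (hf : AEStronglyMeasurable f μ) (hg : AEStronglyMeasurable g μ)
    (hfi : Integrable (fun x => |f x| ^ p) μ) (hgi : Integrable (fun x => |g x| ^ p) μ)
    (hfr : (∫ x, |f x| ^ p ∂μ) ^ (1 / p) ≤ r) (hgr : (∫ x, |g x| ^ p ∂μ) ^ (1 / p) ≤ r) :
    (∫ x, (|f x| + |g x|) ^ p ∂μ) ^ (1 / p) ≤ 2 * r := by
  have hr : 0 ≤ r := (Real.rpow_nonneg (integral_nonneg fun x => by positivity) _).trans hfr
  rw [one_div, Real.rpow_inv_le_iff_of_pos (integral_nonneg fun x => by positivity) (by positivity)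
    (by linarith)]
  calc ∫ x, (|f x| + |g x|) ^ p ∂μ ≤ ∫ x, 2 ^ (p - 1) * (|f x| ^ p + |g x| ^ p) ∂μ :=
        integral_mono (integrable_add_abs_rpow hp hf hg hfi hgi) ((hfi.add hgi).const_mul _)
          fun x => Real.add_rpow_le_two_rpow_mul_add_rpow (abs_nonneg _) (abs_nonneg _) hp
    _ = 2 ^ (p - 1) * ((∫ x, |f x| ^ p ∂μ) + ∫ x, |g x| ^ p ∂μ) := by
        rw [integral_const_mul, integral_add hfi hgi]
    _ ≤ 2 ^ (p - 1) * (r ^ p + r ^ p) := by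
        gcongr
        exacts [integral_rpow_abs_le_of_rpow_inv_le (by linarith) hfr,
          integral_rpow_abs_le_of_rpow_inv_le (by linarith) hgr]
    _ = (2 * r) ^ p := by
        rw [Real.mul_rpow zero_le_two hr, ← two_mul, ← mul_assoc, ← Real.rpow_add_one two_ne_zero]
        ring_nf

end

/-- For `p ∈ (1,2)` and `f₁, f₂ ∈ L_p(μ)` with `‖f₁‖_{L_p}, ‖f₂‖_{L_p} ≤ r`:
`‖f₁ - f₂‖_{L_p}² ≤ ((2r)^{2-p}/(p-1)) ∫ (g_p∘f₁ - g_p∘f₂)(f₁ - f₂) dμ`,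
where `g_p(x) = sign(x)|x|^{p-1}`. -/
theorem Lp_uniform_convexity_small_p {X : Type*} [MeasurableSpace X] (μ : Measure X)
    (p : ℝ) (hp1 : 1 < p) (hp2 : p < 2) (r : ℝ)
    (f₁ f₂ : X → ℝ) (hm1 : Measurable f₁) (hm2 : Measurable f₂)
    (hi1 : Integrable (fun x => |f₁ x| ^ p) μ)
    (hi2 : Integrable (fun x => |f₂ x| ^ p) μ)
    (hr1 : (∫ x, |f₁ x| ^ p ∂μ) ^ (1 / p) ≤ r)
    (hr2 : (∫ x, |f₂ x| ^ p ∂μ) ^ (1 / p) ≤ r)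
    (hiprod : Integrable (fun x =>
      (Real.sign (f₁ x) * |f₁ x| ^ (p - 1) - Real.sign (f₂ x) * |f₂ x| ^ (p - 1)) *
        (f₁ x - f₂ x)) μ) :
    ((∫ x, |f₁ x - f₂ x| ^ p ∂μ) ^ (1 / p)) ^ 2 ≤
      (2 * r) ^ (2 - p) / (p - 1) *
        ∫ x, (Real.sign (f₁ x) * |f₁ x| ^ (p - 1) - Real.sign (f₂ x) * |f₂ x| ^ (p - 1)) *
          (f₁ x - f₂ x) ∂μ := by
  set w := fun x => (|f₁ x| + |f₂ x|) ^ (p - 2) * (f₁ x - f₂ x) ^ 2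
  have hpoint (x : X) : (p - 1) * w x ≤
      (signPow (p - 1) (f₁ x) - signPow (p - 1) (f₂ x)) * (f₁ x - f₂ x) :=
    signPow_gap hp1 hp2.le (f₁ x) (f₂ x)
  have hw : Integrable w μ := by
    refine (hiprod.div_const (p - 1)).mono' (by fun_prop) (Filter.Eventually.of_forall fun x => ?_)
    rw [Real.norm_of_nonneg (by positivity), le_div_iff₀ (by linarith), mul_comm]
    exact hpoint x
  have hgap : (p - 1) * ∫ x, w x ∂μ ≤
      ∫ x, (signPow (p - 1) (f₁ x) - signPow (p - 1) (f₂ x)) * (f₁ x - f₂ x) ∂μ := by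
    rw [← integral_const_mul]
    exact integral_mono (hw.const_mul _) hiprod hpoint
  have hs_norm := rpow_integral_add_abs_rpow_le hp1.le hm1.aestronglyMeasurable
    hm2.aestronglyMeasurable hi1 hi2 hr1 hr2
  calc ((∫ x, |f₁ x - f₂ x| ^ p ∂μ) ^ (1 / p)) ^ 2
      ≤ (∫ x, w x ∂μ) * ((∫ x, (|f₁ x| + |f₂ x|) ^ p ∂μ) ^ (1 / p)) ^ (2 - p) :=
        sq_integral_rpow_abs_rpow_le (by linarith) hp2 (fun x => abs_sub _ _) hw
          (integrable_add_abs_rpow hp1.le hm1.aestronglyMeasurable hm2.aestronglyMeasurable hi1 hi2)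
    _ ≤ (∫ x, (signPow (p - 1) (f₁ x) - signPow (p - 1) (f₂ x)) * (f₁ x - f₂ x) ∂μ) / (p - 1) *
          (2 * r) ^ (2 - p) := by
        gcongr
        · have hw0 : 0 ≤ ∫ x, w x ∂μ := integral_nonneg fun x => by positivity
          exact div_nonneg ((mul_nonneg (by linarith) hw0).trans hgap) (by linarith)
        · rw [le_div_iff₀ (by linarith), mul_comm]
          exact hgap
    _ = (2 * r) ^ (2 - p) / (p - 1) *
          ∫ x, (signPow (p - 1) (f₁ x) - signPow (p - 1) (f₂ x)) * (f₁ x - f₂ x) ∂μ := by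
        ring
end

section
/- Let p ∈ [2, ∞), λ > 0, and let E : ℝ^M × ℝ^M → ℝ≥0 be convex and differentiable in its second argument with y ↦ ∇_f E(y, ν(f)) Lipschitz in y with constant K (uniformly in f ∈ ℝ^N), where ν : ℝ^N → ℝ^M is linear. Suppose f_{y₁}, f_{y₂} ∈ ℝ^N are minimizers of f ↦ E(y_i, ν f) + λ‖f‖_p^p for y₁, y₂ ∈ ℝ^M respectively. Then ‖f_{y₁} - f_{y₂}‖_p ≤ (2^{p-2} K/(λ p))^{1/(p-1)} · ‖y₁ - y₂‖₂^{1/(p-1)}. -/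
/-!
Write `g_p(x) = sign(x) |x|^{p-1}`. The first-order conditions at the two minimizers read
`∇E(yᵢ, ν fᵢ) + λ p g_p(fᵢ) = 0`. Pairing their difference with `f₁ - f₂`, monotonicity of the
gradient of the convex map `f ↦ E(y₁, ν f)` lets one replace `∇E(y₁, ν f₁)` by `∇E(y₁, ν f₂)`,
which is `K ‖y₁ - y₂‖₂`-close to `∇E(y₂, ν f₂)` in `ℓ_q`. With Hölder's inequality and the
`p`-uniform monotonicity `|x - y|^p ≤ 2^{p-2} (g_p x - g_p y)(x - y)` this yields
`λ p ‖f₁ - f₂‖_p^p ≤ 2^{p-2} K ‖y₁ - y₂‖₂ ‖f₁ - f₂‖_p`; dividing by `‖f₁ - f₂‖_p` gives the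
claim.
-/

open Finset

theorem ConvexOn.apply_sub_le_of_hasFDerivAt {E : Type*} [NormedAddCommGroup E] [NormedSpace ℝ E]
    {F : E → ℝ} {F' : E → E →L[ℝ] ℝ} (hF : ConvexOn ℝ Set.univ F)
    (hF' : ∀ x, HasFDerivAt F (F' x) x) (a b : E) : F' b (a - b) ≤ F' a (a - b) := by
  set φ := F ∘ AffineMap.lineMap (k := ℝ) b a
  have hφ : ConvexOn ℝ Set.univ φ := by
    simpa using hF.comp_affineMap (AffineMap.lineMap b a)
  have hφ' (t : ℝ) : HasDerivAt φ (F' (AffineMap.lineMap b a t) (a - b)) t :=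
    (hF' _).comp_hasDerivAt t AffineMap.hasDerivAt_lineMap
  have h₀ := hφ.le_slope_of_hasDerivAt (Set.mem_univ 0) (Set.mem_univ 1) one_pos (hφ' 0)
  have h₁ := hφ.slope_le_of_hasDerivAt (Set.mem_univ 0) (Set.mem_univ 1) one_pos (hφ' 1)
  simpa using h₀.trans h₁

lemma le_rpow_mul_rpow_of_rpow_le {A C R q : ℝ} (hA : 0 ≤ A) (hR : 0 ≤ R) (hq : 0 < q)
    (h : A ^ q ≤ C * R) : A ≤ C ^ (1 / q) * R ^ (1 / q) := by
  rcases hR.eq_or_lt with rfl | hR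
  · have hAq : A ^ q = 0 := le_antisymm (by simpa using h) (by positivity)
    rw [Real.rpow_eq_zero hA hq.ne'] at hAq
    rw [hAq, Real.zero_rpow (one_div_pos.2 hq).ne', mul_zero]
  · have hC : 0 ≤ C := nonneg_of_mul_nonneg_left ((Real.rpow_nonneg hA q).trans h) hR
    rw [← Real.mul_rpow hC hR.le, one_div, Real.le_rpow_inv_iff_of_pos hA (by positivity) hq]
    exact h

lemma rpow_sub_one_le_of_rpow_le_mul {A B p : ℝ} (hA : 0 ≤ A) (hB : 0 ≤ B) (hp : 1 < p)
    (h : A ^ p ≤ B * A) : A ^ (p - 1) ≤ B := by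
  rcases hA.eq_or_lt with rfl | hA
  · rwa [Real.zero_rpow (by linarith)]
  · rw [← sub_add_cancel p 1, Real.rpow_add_one hA.ne'] at h
    exact le_of_mul_le_mul_right h hA

lemma rpow_one_div_le_of_mul_le_mul_rpow_one_div {B R S c p : ℝ} (hp : 1 < p) (hc : 0 < c)
    (hS : 0 ≤ S) (hR : 0 ≤ R) (hBR : 0 ≤ B * R) (h : c * S ≤ B * R * S ^ (1 / p)) :
    S ^ (1 / p) ≤ (B / c) ^ (1 / (p - 1)) * R ^ (1 / (p - 1)) := by
  have hA : 0 ≤ S ^ (1 / p) := by positivity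
  refine le_rpow_mul_rpow_of_rpow_le hA hR (by linarith)
    (rpow_sub_one_le_of_rpow_le_mul hA ?_ hp ?_)
  · rw [div_mul_eq_mul_div]
    exact div_nonneg hBR hc.le
  · rw [one_div, Real.rpow_inv_rpow hS (by linarith), ← one_div, div_mul_eq_mul_div,
      div_mul_eq_mul_div, le_div_iff₀ hc]
    linarith

/-- The paper's `g_p(x) = sign(x) |x|^{p-1}`, in the form produced by `hasDerivAt_abs_rpow`. -/
noncomputable def signedRpow (p x : ℝ) : ℝ := |x| ^ (p - 2) * x

variable {p : ℝ}

lemma signedRpow_of_nonneg (hp : 1 < p) {x : ℝ} (hx : 0 ≤ x) : signedRpow p x = x ^ (p - 1) := by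
  rw [signedRpow, abs_of_nonneg hx, ← Real.rpow_add_one' hx (by linarith)]
  ring_nf

lemma signedRpow_neg (x : ℝ) : signedRpow p (-x) = -signedRpow p x := by
  simp [signedRpow]

lemma two_mul_rpow_le_signedRpow_add_sub_signedRpow_sub (hp : 2 ≤ p) {m r : ℝ} (hm : 0 ≤ m)
    (hr : 0 ≤ r) : 2 * r ^ (p - 1) ≤ signedRpow p (m + r) - signedRpow p (m - r) := by
  have hp1 : 1 ≤ p - 1 := by linarith
  have hp1' : 1 < p := by linarith
  rw [signedRpow_of_nonneg hp1' (by linarith)]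
  rcases le_total r m with hrm | hmr
  · have hsuper : (m - r) ^ (p - 1) + (2 * r) ^ (p - 1) ≤ (m + r) ^ (p - 1) := by
      convert Real.add_rpow_le_rpow_add (sub_nonneg.2 hrm) (by positivity : 0 ≤ 2 * r) hp1 using 2
      ring
    have htwo : 2 * r ^ (p - 1) ≤ (2 * r) ^ (p - 1) := by
      rw [Real.mul_rpow zero_le_two hr]
      gcongr
      simpa using Real.rpow_le_rpow_of_exponent_le one_le_two hp1
    rw [signedRpow_of_nonneg hp1' (sub_nonneg.2 hrm)]
    linarith
  · have hjensen := (convexOn_rpow hp1).2 (Set.mem_Ici.2 (by linarith : 0 ≤ m + r))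
      (Set.mem_Ici.2 (by linarith : 0 ≤ r - m)) one_half_pos.le one_half_pos.le (add_halves 1)
    rw [show m - r = -(r - m) by ring, signedRpow_neg, signedRpow_of_nonneg hp1' (by linarith)]
    simp only [smul_eq_mul] at hjensen
    rw [show 1 / 2 * (m + r) + 1 / 2 * (r - m) = r by ring] at hjensen
    linarith

lemma abs_sub_rpow_le_signedRpow_sub_mul_sub (hp : 2 ≤ p) (x y : ℝ) :
    |x - y| ^ p ≤ 2 ^ (p - 2) * ((signedRpow p x - signedRpow p y) * (x - y)) := by
  wlog hyx : y ≤ x generalizing x y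
  · rw [abs_sub_comm, show (signedRpow p x - signedRpow p y) * (x - y)
      = (signedRpow p y - signedRpow p x) * (y - x) by ring]
    exact this y x (le_of_not_ge hyx)
  set r := (x - y) / 2
  have hr : 0 ≤ r := by positivity
  have hgap : 2 * r ^ (p - 1) ≤ signedRpow p x - signedRpow p y := by
    rcases le_total 0 ((x + y) / 2) with hm | hm
    · simpa [r, show (x + y) / 2 + (x - y) / 2 = x by ring,
        show (x + y) / 2 - (x - y) / 2 = y by ring] using
        two_mul_rpow_le_signedRpow_add_sub_signedRpow_sub hp hm hr
    · have := two_mul_rpow_le_signedRpow_add_sub_signedRpow_sub hp (neg_nonneg.2 hm) hr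
      rw [show -((x + y) / 2) + r = -y by ring, show -((x + y) / 2) - r = -x by ring,
        signedRpow_neg, signedRpow_neg] at this
      linarith
  have hpow : r ^ p = r ^ (p - 1) * r := by
    rw [← Real.rpow_add_one' hr (by linarith), sub_add_cancel]
  calc |x - y| ^ p = 2 ^ (p - 2) * (2 * r ^ (p - 1) * (x - y)) := by
        rw [abs_of_nonneg (by linarith), show x - y = 2 * r by ring, Real.mul_rpow zero_le_two hr,
          Real.rpow_sub two_pos, hpow]
        ring
    _ ≤ 2 ^ (p - 2) * ((signedRpow p x - signedRpow p y) * (x - y)) := by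
        gcongr

section Finite

variable {ι : Type*} [Fintype ι]

lemma sum_abs_sub_rpow_le (hp : 2 ≤ p) (x y : ι → ℝ) :
    ∑ i, |x i - y i| ^ p
      ≤ 2 ^ (p - 2) * ∑ i, (signedRpow p (x i) - signedRpow p (y i)) * (x i - y i) := by
  rw [mul_sum]
  exact sum_le_sum fun i _ => abs_sub_rpow_le_signedRpow_sub_mul_sub hp (x i) (y i)

lemma hasFDerivAt_sum_abs_rpow (hp : 1 < p) (x : ι → ℝ) :
    HasFDerivAt (fun f : ι → ℝ => ∑ i, |f i| ^ p)
      (∑ i, (p * signedRpow p (x i)) • (ContinuousLinearMap.proj i : (ι → ℝ) →L[ℝ] ℝ)) x := by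
  refine HasFDerivAt.fun_sum fun i _ => ?_
  rw [signedRpow, ← mul_assoc]
  exact (hasDerivAt_abs_rpow (x i) hp).comp_hasFDerivAt (f := fun f : ι → ℝ => f i) x
    (hasFDerivAt_apply i x)

lemma add_mul_signedRpow_eq_zero_of_forall_le (hp : 1 < p) {lam : ℝ} {F : (ι → ℝ) → ℝ}
    {G x : ι → ℝ}
    (hF : HasFDerivAt F (∑ i, G i • (ContinuousLinearMap.proj i : (ι → ℝ) →L[ℝ] ℝ)) x)
    (hmin : ∀ f, F x + lam * ∑ i, |x i| ^ p ≤ F f + lam * ∑ i, |f i| ^ p) (j : ι) :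
    G j + lam * (p * signedRpow p (x j)) = 0 := by
  classical
  have hzero := IsLocalMin.hasFDerivAt_eq_zero (Filter.Eventually.of_forall hmin)
    (hF.add ((hasFDerivAt_sum_abs_rpow hp x).const_mul lam))
  simpa [Pi.single_apply] using congrArg (fun L => L (Pi.single j 1)) hzero

lemma mul_sum_abs_sub_rpow_le_of_optimality (hp : 2 ≤ p) {lam : ℝ} (hlam : 0 ≤ lam)
    {G₁ G₂ H x y : ι → ℝ} (hx : ∀ j, G₁ j + lam * (p * signedRpow p (x j)) = 0)
    (hy : ∀ j, G₂ j + lam * (p * signedRpow p (y j)) = 0)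
    (hH : ∑ i, H i * (x i - y i) ≤ ∑ i, G₁ i * (x i - y i)) :
    lam * p * ∑ i, |x i - y i| ^ p ≤ 2 ^ (p - 2) *
      ((∑ i, |G₂ i - H i| ^ (p / (p - 1))) ^ ((p - 1) / p) * (∑ i, |x i - y i| ^ p) ^ (1 / p)) := by
  have hHolder : (p / (p - 1)).HolderConjugate p :=
    (Real.HolderConjugate.conjExponent (by linarith)).symm
  calc lam * p * ∑ i, |x i - y i| ^ p
      ≤ lam * p * (2 ^ (p - 2) * ∑ i, (signedRpow p (x i) - signedRpow p (y i)) * (x i - y i)) :=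
        mul_le_mul_of_nonneg_left (sum_abs_sub_rpow_le hp x y) (mul_nonneg hlam (by linarith))
    _ = 2 ^ (p - 2) * ∑ i, (G₂ i - G₁ i) * (x i - y i) := by
        rw [mul_left_comm, mul_sum]
        congr 1
        refine sum_congr rfl fun i _ => ?_
        linear_combination (x i - y i) * (hx i - hy i)
    _ ≤ 2 ^ (p - 2) * ∑ i, (G₂ i - H i) * (x i - y i) := by
        gcongr 2 ^ (p - 2) * ?_
        simp only [sub_mul, sum_sub_distrib]
        linarith
    _ ≤ 2 ^ (p - 2) *
      ((∑ i, |G₂ i - H i| ^ (p / (p - 1))) ^ ((p - 1) / p) * (∑ i, |x i - y i| ^ p) ^ (1 / p)) := by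
        gcongr
        simpa only [one_div_div] using Real.inner_le_Lp_mul_Lq univ (fun i => G₂ i - H i)
          (fun i => x i - y i) hHolder

end Finite

theorem lp_holder_stability_large_p_general {M N : ℕ} (p : ℝ) (hp : 2 ≤ p)
    (lam : ℝ) (hlam : 0 < lam)
    (E : (Fin M → ℝ) → (Fin M → ℝ) → ℝ)
    (ν : (Fin N → ℝ) →ₗ[ℝ] (Fin M → ℝ))
    (grad : (Fin M → ℝ) → (Fin N → ℝ) → (Fin N → ℝ))
    (hgrad : ∀ y f, HasFDerivAt (fun f' => E y (ν f'))
      (∑ i, grad y f i • (ContinuousLinearMap.proj i : (Fin N → ℝ) →L[ℝ] ℝ)) f)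
    (hconv : ∀ y, ConvexOn ℝ Set.univ (E y))
    (K : ℝ)
    (hK : ∀ y₁ y₂ : Fin M → ℝ, ∀ f : Fin N → ℝ,
      (∑ i, |grad y₁ f i - grad y₂ f i| ^ (p / (p - 1))) ^ ((p - 1) / p) ≤
        K * Real.sqrt (∑ j, (y₁ j - y₂ j) ^ 2))
    (y₁ y₂ : Fin M → ℝ) (f₁ f₂ : Fin N → ℝ)
    (hf₁ : ∀ f, E y₁ (ν f₁) + lam * ∑ i, |f₁ i| ^ p ≤ E y₁ (ν f) + lam * ∑ i, |f i| ^ p)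
    (hf₂ : ∀ f, E y₂ (ν f₂) + lam * ∑ i, |f₂ i| ^ p ≤ E y₂ (ν f) + lam * ∑ i, |f i| ^ p) :
    (∑ i, |f₁ i - f₂ i| ^ p) ^ (1 / p) ≤
      (2 ^ (p - 2) * K / (lam * p)) ^ (1 / (p - 1)) *
        (Real.sqrt (∑ j, (y₁ j - y₂ j) ^ 2)) ^ (1 / (p - 1)) := by
  have hp1 : 1 < p := by linarith
  set R := Real.sqrt (∑ j, (y₁ j - y₂ j) ^ 2)
  have hmono : ∑ i, grad y₁ f₂ i * (f₁ i - f₂ i) ≤ ∑ i, grad y₁ f₁ i * (f₁ i - f₂ i) := by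
    simpa using ((hconv y₁).comp_linearMap ν).apply_sub_le_of_hasFDerivAt (hgrad y₁) f₁ f₂
  have hlip : (∑ i, |grad y₂ f₂ i - grad y₁ f₂ i| ^ (p / (p - 1))) ^ ((p - 1) / p) ≤ K * R := by
    simpa only [R, sub_sq_comm (y₂ _)] using hK y₂ y₁ f₂
  have hKR : 0 ≤ K * R := (Real.rpow_nonneg (sum_nonneg fun _ _ => by positivity) _).trans hlip
  have hest := mul_sum_abs_sub_rpow_le_of_optimality hp hlam.le
    (add_mul_signedRpow_eq_zero_of_forall_le hp1 (hgrad y₁ f₁) hf₁)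
    (add_mul_signedRpow_eq_zero_of_forall_le hp1 (hgrad y₂ f₂) hf₂) hmono
  refine rpow_one_div_le_of_mul_le_mul_rpow_one_div hp1 (by positivity)
    (sum_nonneg fun _ _ => by positivity) (Real.sqrt_nonneg _)
    (by rw [mul_assoc]; exact mul_nonneg (by positivity) hKR) ?_
  calc lam * p * ∑ i, |f₁ i - f₂ i| ^ p ≤ 2 ^ (p - 2) * (_ * (∑ i, |f₁ i - f₂ i| ^ p) ^ (1 / p)) :=
        hest
    _ ≤ 2 ^ (p - 2) * (K * R * (∑ i, |f₁ i - f₂ i| ^ p) ^ (1 / p)) := by gcongr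
    _ = 2 ^ (p - 2) * K * R * (∑ i, |f₁ i - f₂ i| ^ p) ^ (1 / p) := by ring

/-- Hölder continuity of `ℓ_p`-regularized linear inverse problems for `p ∈ [2,∞)`:
if `E` is nonnegative, convex and differentiable in its second argument with gradient
(of `f ↦ E(y, νf)`) Lipschitz in `y` (in the dual `ℓ_q` norm, uniformly in `f`), and
`f_{y₁}, f_{y₂}` minimize `f ↦ E(y_i, νf) + λ‖f‖_p^p`, then
`‖f_{y₁} - f_{y₂}‖_p ≤ (2^{p-2}K/(λp))^{1/(p-1)} ‖y₁ - y₂‖₂^{1/(p-1)}`. -/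
theorem lp_holder_stability_large_p {M N : ℕ} (p : ℝ) (hp : 2 ≤ p)
    (lam : ℝ) (hlam : 0 < lam)
    (E : (Fin M → ℝ) → (Fin M → ℝ) → ℝ) (hE0 : ∀ y z, 0 ≤ E y z)
    (ν : (Fin N → ℝ) →ₗ[ℝ] (Fin M → ℝ))
    (grad : (Fin M → ℝ) → (Fin N → ℝ) → (Fin N → ℝ))
    (hgrad : ∀ y f, HasFDerivAt (fun f' => E y (ν f'))
      (∑ i, grad y f i • (ContinuousLinearMap.proj i : (Fin N → ℝ) →L[ℝ] ℝ)) f)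
    (hconv : ∀ y, ConvexOn ℝ Set.univ (E y))
    (K : ℝ)
    (hK : ∀ y₁ y₂ : Fin M → ℝ, ∀ f : Fin N → ℝ,
      (∑ i, |grad y₁ f i - grad y₂ f i| ^ (p / (p - 1))) ^ ((p - 1) / p) ≤
        K * Real.sqrt (∑ j, (y₁ j - y₂ j) ^ 2))
    (y₁ y₂ : Fin M → ℝ) (f₁ f₂ : Fin N → ℝ)
    (hf₁ : ∀ f, E y₁ (ν f₁) + lam * ∑ i, |f₁ i| ^ p ≤ E y₁ (ν f) + lam * ∑ i, |f i| ^ p)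
    (hf₂ : ∀ f, E y₂ (ν f₂) + lam * ∑ i, |f₂ i| ^ p ≤ E y₂ (ν f) + lam * ∑ i, |f i| ^ p) :
    (∑ i, |f₁ i - f₂ i| ^ p) ^ (1 / p) ≤
      (2 ^ (p - 2) * K / (lam * p)) ^ (1 / (p - 1)) *
        (Real.sqrt (∑ j, (y₁ j - y₂ j) ^ 2)) ^ (1 / (p - 1)) :=
  lp_holder_stability_large_p_general p hp lam hlam E ν grad hgrad hconv K hK y₁ y₂ f₁ f₂ hf₁ hf₂
end
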